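/- arXiv:2209.08666 — 2 statements merged into one kernel-verified Lean document; each statement's English description precedes it below -/
import Mathlib

section
/- Let p₁, p₂, p* be probability densities and define the averaged densities p̄ᵢ = (pᵢ + p*)/2 for i = 1,2. Then for every point y, |√p̄₁(y) − √p̄₂(y)| ≤ (√2/2)·|√p₁(y) − √p₂(y)|. Consequently H²(p̄₁, p̄₂) ≤ (1/2)·H²(p₁, p₂), where H² denotes squared Hellinger distance. -/
open MeasureTheory

/-- Squared Hellinger distance between two densities with respect to `μ`. -/
noncomputable def Hsq {α : Type*} [MeasurableSpace α] (μ : Measure α) (q₁ q₂ : α → ℝ) : ℝ :=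
  (1 / 2) * ∫ y, (Real.sqrt (q₁ y) - Real.sqrt (q₂ y)) ^ 2 ∂μ

lemma aux_sqrt (a b c : ℝ) (ha : 0 ≤ a) (hb : 0 ≤ b) (hc : 0 ≤ c) (hba : b ≤ a) :
    Real.sqrt (a+c) + Real.sqrt b ≤ Real.sqrt a + Real.sqrt (b+c) := by
  have h1 : Real.sqrt (a+c) * Real.sqrt b ≤ Real.sqrt (b+c) * Real.sqrt a := by
    rw [← Real.sqrt_mul (by linarith), ← Real.sqrt_mul (by linarith)]
    apply Real.sqrt_le_sqrt; nlinarith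
  nlinarith [Real.sq_sqrt (show (0:ℝ) ≤ a+c by linarith), Real.sq_sqrt (show (0:ℝ) ≤ b+c by linarith),
    Real.sq_sqrt ha, Real.sq_sqrt hb, Real.sqrt_nonneg a, Real.sqrt_nonneg b,
    Real.sqrt_nonneg (a+c), Real.sqrt_nonneg (b+c),
    sq_nonneg (Real.sqrt (a+c) + Real.sqrt b), sq_nonneg (Real.sqrt a + Real.sqrt (b+c))]

lemma abs_sqrt_shift (a b c : ℝ) (ha : 0 ≤ a) (hb : 0 ≤ b) (hc : 0 ≤ c) :
    |Real.sqrt (a+c) - Real.sqrt (b+c)| ≤ |Real.sqrt a - Real.sqrt b| := by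
  rcases le_total b a with h | h
  · have := aux_sqrt a b c ha hb hc h
    have s1 : Real.sqrt b ≤ Real.sqrt a := Real.sqrt_le_sqrt h
    have s2 : Real.sqrt (b+c) ≤ Real.sqrt (a+c) := Real.sqrt_le_sqrt (by linarith)
    rw [abs_of_nonneg (by linarith), abs_of_nonneg (by linarith)]; linarith
  · have := aux_sqrt b a c hb ha hc h
    have s1 : Real.sqrt a ≤ Real.sqrt b := Real.sqrt_le_sqrt h
    have s2 : Real.sqrt (a+c) ≤ Real.sqrt (b+c) := Real.sqrt_le_sqrt (by linarith)
    rw [abs_of_nonpos (by linarith), abs_of_nonpos (by linarith)]; linarith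

lemma ptwise (a b c : ℝ) (ha : 0 ≤ a) (hb : 0 ≤ b) (hc : 0 ≤ c) :
    |Real.sqrt ((a+c)/2) - Real.sqrt ((b+c)/2)| ≤
      (Real.sqrt 2 / 2) * |Real.sqrt a - Real.sqrt b| := by
  have h2 : (0:ℝ) < Real.sqrt 2 := Real.sqrt_pos.mpr (by norm_num)
  have hsq2 : Real.sqrt 2 * Real.sqrt 2 = 2 := Real.mul_self_sqrt (by norm_num)
  rw [Real.sqrt_div (by linarith) 2, Real.sqrt_div (by linarith) 2, div_sub_div_same,
    abs_div, abs_of_nonneg (Real.sqrt_nonneg 2)]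
  have key := abs_sqrt_shift a b c ha hb hc
  rw [div_le_iff₀ h2]
  calc |Real.sqrt (a+c) - Real.sqrt (b+c)| ≤ |Real.sqrt a - Real.sqrt b| := key
    _ = Real.sqrt 2 / 2 * |Real.sqrt a - Real.sqrt b| * Real.sqrt 2 := by
        field_simp; nlinarith [abs_nonneg (Real.sqrt a - Real.sqrt b)]

theorem hellinger_averaged_contraction {α : Type*} [MeasurableSpace α] (μ : Measure α)
    (p₁ p₂ pstar : α → ℝ)
    (hm1 : Measurable p₁) (hm2 : Measurable p₂) (hms : Measurable pstar)
    (h1 : ∀ y, 0 ≤ p₁ y) (h2 : ∀ y, 0 ≤ p₂ y) (hs : ∀ y, 0 ≤ pstar y)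
    (hint1 : ∫ y, p₁ y ∂μ = 1) (hint2 : ∫ y, p₂ y ∂μ = 1) (hints : ∫ y, pstar y ∂μ = 1) :
    (∀ y,
      |Real.sqrt ((p₁ y + pstar y) / 2) - Real.sqrt ((p₂ y + pstar y) / 2)| ≤
        (Real.sqrt 2 / 2) * |Real.sqrt (p₁ y) - Real.sqrt (p₂ y)|) ∧
    Hsq μ (fun y => (p₁ y + pstar y) / 2) (fun y => (p₂ y + pstar y) / 2) ≤
      (1 / 2) * Hsq μ p₁ p₂ := by
  have key : ∀ y, |Real.sqrt ((p₁ y + pstar y) / 2) - Real.sqrt ((p₂ y + pstar y) / 2)| ≤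
      (Real.sqrt 2 / 2) * |Real.sqrt (p₁ y) - Real.sqrt (p₂ y)| :=
    fun y => ptwise (p₁ y) (p₂ y) (pstar y) (h1 y) (h2 y) (hs y)
  refine ⟨key, ?_⟩
  set f : α → ℝ := fun y =>
    (Real.sqrt ((p₁ y + pstar y) / 2) - Real.sqrt ((p₂ y + pstar y) / 2)) ^ 2 with hf
  set g : α → ℝ := fun y => (1/2) * (Real.sqrt (p₁ y) - Real.sqrt (p₂ y)) ^ 2 with hg
  have hfg : ∀ y, f y ≤ g y := by
    intro y
    have hk := key y
    have h2s : Real.sqrt 2 * Real.sqrt 2 = 2 := Real.mul_self_sqrt (by norm_num)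
    have := mul_self_le_mul_self (abs_nonneg _) hk
    simp only [hf, hg]
    nlinarith [sq_abs (Real.sqrt ((p₁ y + pstar y) / 2) - Real.sqrt ((p₂ y + pstar y) / 2)),
      sq_abs (Real.sqrt (p₁ y) - Real.sqrt (p₂ y))]
  have hi1 : Integrable p₁ μ := by
    by_contra h; rw [integral_undef h] at hint1; norm_num at hint1
  have hi2 : Integrable p₂ μ := by
    by_contra h; rw [integral_undef h] at hint2; norm_num at hint2
  have hig : Integrable g μ := by
    refine Integrable.mono' ((hi1.add hi2).const_mul 2) ?_ ?_
    · exact (((hm1.sqrt.sub hm2.sqrt).pow_const 2).const_mul _).aestronglyMeasurable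
    · refine Filter.Eventually.of_forall fun y => ?_
      simp only [hg, Real.norm_eq_abs, Pi.add_apply]
      rw [abs_of_nonneg (by positivity)]
      nlinarith [Real.sq_sqrt (h1 y), Real.sq_sqrt (h2 y), Real.sqrt_nonneg (p₁ y),
        Real.sqrt_nonneg (p₂ y), sq_nonneg (Real.sqrt (p₁ y) + Real.sqrt (p₂ y))]
  have hif : Integrable f μ := by
    refine Integrable.mono' hig ?_ ?_
    · exact ((((hm1.add hms).div_const 2).sqrt.sub
        (((hm2.add hms).div_const 2)).sqrt).pow_const 2).aestronglyMeasurable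
    · refine Filter.Eventually.of_forall fun y => ?_
      rw [Real.norm_eq_abs, abs_of_nonneg (sq_nonneg _)]
      exact hfg y
  have hmono : ∫ y, f y ∂μ ≤ ∫ y, g y ∂μ := integral_mono hif hig hfg
  have hgint : ∫ y, g y ∂μ = (1/2) * ∫ y, (Real.sqrt (p₁ y) - Real.sqrt (p₂ y)) ^ 2 ∂μ := by
    simp only [hg]; rw [integral_const_mul]
  simp only [Hsq]
  calc (1/2) * ∫ y, f y ∂μ ≤ (1/2) * ∫ y, g y ∂μ := by linarith
    _ = (1/2) * ((1/2) * ∫ y, (Real.sqrt (p₁ y) - Real.sqrt (p₂ y)) ^ 2 ∂μ) := by rw [hgint]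
end

section
/- Let Π be a set of policies, J: Π → ℝ a value functional maximized at π* ∈ Π, and for each π ∈ Π let C(π) be a set of real numbers (candidate value estimates) with the properties: (a) J(π) ∈ C(π) for every π ∈ Π, and (b) |x − J(π*)| ≤ ε for every x ∈ C(π*). Define π̂ ∈ argmax_{π∈Π} min_{x ∈ C(π)} x. Then J(π*) − J(π̂) ≤ ε. -/
theorem pessimism_principle {P : Type*} (J : P → ℝ) (pstar : P)
    (hstar : ∀ p, J p ≤ J pstar)
    (C : P → Set ℝ) (m : P → ℝ)
    (hm : ∀ p, IsLeast (C p) (m p))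
    (ε : ℝ)
    (ha : ∀ p, J p ∈ C p)
    (hb : ∀ x ∈ C pstar, |x - J pstar| ≤ ε)
    (phat : P) (hphat : ∀ p, m p ≤ m phat) :
    J pstar - J phat ≤ ε := by
  have h1 : m phat ≤ J phat := (hm phat).2 (ha phat)
  have h2 : m pstar ≤ m phat := hphat pstar
  have h3 : |m pstar - J pstar| ≤ ε := hb _ (hm pstar).1
  have := abs_le.mp h3
  linarith
end
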